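/- arXiv:2112.04083 — 2 statements merged into one kernel-verified Lean document; each statement's English description precedes it below -/
import Mathlib

section
/- Let ν_1 > ν_2 ≥ … ≥ ν_T be target means, ν̄ = (ν_1 + ν_2)/2, and suppose each target arm a has a confidence interval [L(a), U(a)] containing ν_a. Let B = argmax_a L(a) and C = argmax_{a ≠ B} U(a). If the algorithm has not stopped, i.e., L(B) < U(C), then ν̄ ∈ [L(B), U(B)] or ν̄ ∈ [L(C), U(C)]. -/
/-- if T-LUCB has not stopped, the midpoint ν̄ = (ν₁ + ν₂)/2 lies
in the confidence interval of B or of C. -/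
theorem stmt_7 (T : ℕ) (hT : 2 ≤ T) (ν L U : Fin T → ℝ)
    (hord : ∀ a b : Fin T, a ≤ b → ν b ≤ ν a)
    (hgap : ν ⟨1, by omega⟩ < ν ⟨0, by omega⟩)
    (hvalid : ∀ a, L a ≤ ν a ∧ ν a ≤ U a)
    (B C : Fin T) (hBC : C ≠ B)
    (hB : ∀ a, L a ≤ L B)
    (hC : ∀ a, a ≠ B → U a ≤ U C)
    (hnostop : L B < U C) :
    (ν ⟨0, by omega⟩ + ν ⟨1, by omega⟩) / 2 ∈ Set.Icc (L B) (U B) ∨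
    (ν ⟨0, by omega⟩ + ν ⟨1, by omega⟩) / 2 ∈ Set.Icc (L C) (U C) := by
  set z : Fin T := ⟨0, by omega⟩
  set o : Fin T := ⟨1, by omega⟩
  set m : ℝ := (ν z + ν o) / 2 with hm
  have hm1 : ν o < m := by rw [hm]; linarith
  have hm0 : m < ν z := by rw [hm]; linarith
  -- any arm ≠ z has ν a ≤ ν o
  have hlow : ∀ a : Fin T, a ≠ z → ν a ≤ ν o := by
    intro a ha
    refine hord o a ?_
    have : a.val ≠ 0 := fun h => ha (Fin.ext h)
    exact Fin.mk_le_of_le_val (by omega)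
  by_cases h1 : L B ≤ m ∧ m ≤ U B
  · exact Or.inl ⟨h1.1, h1.2⟩
  · right
    rcases not_and_or.mp h1 with h | h
    · -- L B > m, so B = z, C ≠ z
      push_neg at h
      have hBz : B = z := by
        by_contra hb
        have := hlow B hb
        have := (hvalid B).1
        linarith
      have hCz : C ≠ z := by rw [← hBz]; exact hBC
      have hLC : L C ≤ m := le_trans (hvalid C).1 (le_trans (hlow C hCz) hm1.le)
      exact ⟨hLC, le_trans h.le hnostop.le⟩
    · -- U B < m, so B ≠ z, U C ≥ U z ≥ ν z > m
      push_neg at h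
      have hBz : B ≠ z := by
        intro hb
        rw [hb] at h
        have := (hvalid z).2
        linarith
      have hUC : m ≤ U C := by
        have := hC z (fun hz => hBz hz.symm)
        have := (hvalid z).2
        linarith
      have hLC : L C ≤ m := by
        by_cases hCz : C = z
        · have := hB C
          have := (hvalid B).1
          have := (hvalid B).2
          linarith
        · exact le_trans (hvalid C).1 (le_trans (hlow C hCz) hm1.le)
      exact ⟨hLC, hUC⟩
end

section
/- Let B_t = argmax_a L_t(a) over target arms and suppose target arm confidence intervals are valid (L_t(a) ≤ ν_a ≤ U_t(a) for all a, t). If the algorithm stops at round t with L_t(B_t) + ε ≥ U_t(C_t) where C_t = argmax_{a ≠ B_t} U_t(a), and B_t is not an optimal arm, then ν_{B_t} + ε ≥ ν_1 := max_a ν_a. -/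
/-- correctness of T-LUCB when it stops with a non-optimal B_t. -/
theorem stmt_17 (T : ℕ) (ν L U : Fin T → ℝ) (ε : ℝ) (hε : 0 ≤ ε)
    (hvalid : ∀ a, L a ≤ ν a ∧ ν a ≤ U a)
    (B C : Fin T)
    (hB : ∀ a, L a ≤ L B)
    (hCne : C ≠ B)
    (hC : ∀ a, a ≠ B → U a ≤ U C)
    (hstop : U C ≤ L B + ε)
    (astar : Fin T) (hopt : ∀ a, ν a ≤ ν astar)
    (hBnotopt : B ≠ astar) :
    ∀ a, ν a ≤ ν B + ε := by
  intro a
  calc ν a ≤ ν astar := hopt a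
    _ ≤ U astar := (hvalid astar).2
    _ ≤ U C := hC astar (fun h => hBnotopt h.symm)
    _ ≤ L B + ε := hstop
    _ ≤ ν B + ε := by linarith [(hvalid B).1]
end
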